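/- Let Z be a standard Gaussian random vector in ℝ³ and let x ∈ ℝ³. Then E[1/|x + Z|] ≤ √(2/π), and for x ≠ 0, E[1/|x + Z|] = (1/|x|)(2Φ(|x|) − 1), where Φ is the standard normal CDF. -/

import Mathlib

open MeasureTheory Real
local notation "E3" => EuclideanSpace ℝ (Fin 3)

lemma integrableGaussE3 {b : ℝ} (hb : 0 < b) :
    Integrable (fun v : E3 => Real.exp (-b * ‖v‖ ^ 2)) := by
  have := (GaussianFourier.integrable_cexp_neg_mul_sq_norm_add
    (b := (b:ℂ)) (by simpa using hb) 0 (0 : E3)).norm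
  refine this.congr (Filter.Eventually.of_forall fun v => ?_)
  simp only [zero_mul, add_zero, Complex.norm_exp]
  norm_cast

lemma gaussE3 {b : ℝ} (hb : 0 < b) :
    ∫ v : E3, Real.exp (-b * ‖v‖ ^ 2) = (π / b) ^ ((3:ℝ) / 2) := by
  rw [GaussianFourier.integral_rexp_neg_mul_sq_norm hb]
  norm_num

-- pointwise exponent identity
lemma exponent_eq (x z : E3) (u : ℝ) :
    Real.exp (-‖z‖ ^ 2 / 2) * Real.exp (-u ^ 2 * ‖x + z‖ ^ 2 / 2)
      = Real.exp (-(u ^ 2 * ‖x‖ ^ 2) / (2 * (1 + u ^ 2))) *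
        Real.exp (-((1 + u ^ 2) / 2) * ‖(u ^ 2 / (1 + u ^ 2)) • x + z‖ ^ 2) := by
  rw [← Real.exp_add, ← Real.exp_add]
  congr 1
  have h1 : ‖x + z‖ ^ 2 = ‖x‖ ^ 2 + 2 * inner ℝ x z + ‖z‖ ^ 2 := by
    rw [@norm_add_sq_real]
  have h2 : ‖(u ^ 2 / (1 + u ^ 2)) • x + z‖ ^ 2
      = (u ^ 2 / (1 + u ^ 2)) ^ 2 * ‖x‖ ^ 2
        + 2 * ((u ^ 2 / (1 + u ^ 2)) * inner ℝ x z) + ‖z‖ ^ 2 := by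
    rw [@norm_add_sq_real, norm_smul, real_inner_smul_left]
    rw [mul_pow]
    congr 2
    rw [Real.norm_eq_abs, sq_abs]
  have hu : (1 : ℝ) + u ^ 2 ≠ 0 := by positivity
  rw [h1, h2]
  field_simp
  ring

lemma innerIntegral (x : E3) (u : ℝ) :
    ∫ z : E3, Real.exp (-‖z‖ ^ 2 / 2) * Real.exp (-u ^ 2 * ‖x + z‖ ^ 2 / 2)
      = (2 * π / (1 + u ^ 2)) ^ ((3:ℝ)/2) *
        Real.exp (-(u ^ 2 * ‖x‖ ^ 2) / (2 * (1 + u ^ 2))) := by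
  simp_rw [exponent_eq x _ u]
  rw [MeasureTheory.integral_const_mul]
  have hb : (0:ℝ) < (1 + u ^ 2) / 2 := by positivity
  have ht : ∫ z : E3, Real.exp (-((1 + u ^ 2) / 2) * ‖(u ^ 2 / (1 + u ^ 2)) • x + z‖ ^ 2)
      = ∫ z : E3, Real.exp (-((1 + u ^ 2) / 2) * ‖z‖ ^ 2) :=
    integral_add_left_eq_self (fun z => Real.exp (-((1 + u ^ 2) / 2) * ‖z‖ ^ 2)) _
  rw [ht, gaussE3 hb]
  rw [mul_comm]
  congr 2
  field_simp

lemma halfline {t : ℝ} (ht : 0 < t) :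
    ∫ u in Set.Ioi (0:ℝ), Real.exp (-u ^ 2 * t ^ 2 / 2) = Real.sqrt (2 * π) / (2 * t) := by
  have h : ∀ u : ℝ, -u ^ 2 * t ^ 2 / 2 = -(t ^ 2 / 2) * u ^ 2 := fun u => by ring
  simp_rw [h]
  rw [integral_gaussian_Ioi]
  rw [show π / (t ^ 2 / 2) = 2 * π / t ^ 2 by field_simp]
  rw [Real.sqrt_div (by positivity) , Real.sqrt_sq ht.le]
  ring

lemma sqrt_fact : Real.sqrt (2 / π) * Real.sqrt (2 * π) = 2 := by
  rw [← Real.sqrt_mul (by positivity)]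
  rw [show 2 / π * (2 * π) = 4 by field_simp; ring]
  rw [show (4:ℝ) = 2 ^ 2 by norm_num, Real.sqrt_sq (by norm_num)]

lemma contF (x : E3) : Continuous (fun p : ℝ × E3 =>
    Real.exp (-‖p.2‖ ^ 2 / 2) * Real.exp (-p.1 ^ 2 * ‖x + p.2‖ ^ 2 / 2)) := by
  fun_prop

lemma normF_int (x : E3) (u : ℝ) :
    ∫ z : E3, ‖Real.exp (-‖z‖ ^ 2 / 2) * Real.exp (-u ^ 2 * ‖x + z‖ ^ 2 / 2)‖
      = (2 * π / (1 + u ^ 2)) ^ ((3:ℝ)/2) *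
        Real.exp (-(u ^ 2 * ‖x‖ ^ 2) / (2 * (1 + u ^ 2))) := by
  rw [← innerIntegral x u]
  congr 1 with z
  rw [Real.norm_eq_abs, abs_of_pos (by positivity)]

lemma integrableF (x : E3) :
    Integrable (fun p : ℝ × E3 =>
        Real.exp (-‖p.2‖ ^ 2 / 2) * Real.exp (-p.1 ^ 2 * ‖x + p.2‖ ^ 2 / 2))
      ((volume.restrict (Set.Ioi 0)).prod volume) := by
  rw [MeasureTheory.integrable_prod_iff (contF x).aestronglyMeasurable]
  constructor
  · refine Filter.Eventually.of_forall fun u => ?_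
    refine (integrableGaussE3 (b := 1/2) (by norm_num)).mono ?_ ?_
    · exact (Continuous.aestronglyMeasurable (by fun_prop))
    · refine Filter.Eventually.of_forall fun z => ?_
      rw [Real.norm_eq_abs, Real.norm_eq_abs, abs_of_pos (by positivity),
        abs_of_pos (Real.exp_pos _)]
      calc Real.exp (-‖z‖ ^ 2 / 2) * Real.exp (-u ^ 2 * ‖x + z‖ ^ 2 / 2)
          ≤ Real.exp (-‖z‖ ^ 2 / 2) * 1 := by
            refine mul_le_mul_of_nonneg_left ?_ (Real.exp_pos _).le
            rw [Real.exp_le_one_iff]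
            nlinarith [sq_nonneg u, sq_nonneg ‖x + z‖, sq_nonneg (u * ‖x + z‖)]
        _ = Real.exp (-(1/2) * ‖z‖ ^ 2) := by rw [mul_one]; ring_nf
  · simp_rw [normF_int x]
    refine ((integrable_inv_one_add_sq.const_mul ((2 * π) ^ ((3:ℝ)/2))).restrict
      (s := Set.Ioi 0)).mono ?_ ?_
    · refine (Continuous.aestronglyMeasurable ?_).restrict
      refine Continuous.mul ?_ (Real.continuous_exp.comp
        ((by fun_prop : Continuous fun u:ℝ => -(u ^ 2 * ‖x‖ ^ 2)).div (by fun_prop)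
          (fun u => by positivity)))
      refine Continuous.rpow_const ?_ (fun u => Or.inr (by norm_num))
      exact continuous_const.div (by fun_prop) (fun u => by positivity)
    · refine Filter.Eventually.of_forall fun u => ?_
      have h1 : (0:ℝ) < 1 + u ^ 2 := by positivity
      rw [Real.norm_eq_abs, Real.norm_eq_abs, abs_of_pos (by positivity),
        abs_of_pos (by positivity)]
      calc (2 * π / (1 + u ^ 2)) ^ ((3:ℝ)/2) *
            Real.exp (-(u ^ 2 * ‖x‖ ^ 2) / (2 * (1 + u ^ 2)))
          ≤ (2 * π / (1 + u ^ 2)) ^ ((3:ℝ)/2) * 1 := by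
            refine mul_le_mul_of_nonneg_left ?_ (by positivity)
            rw [Real.exp_le_one_iff]
            have := sq_nonneg (u * ‖x‖)
            have h2 : (0:ℝ) < 2 * (1 + u ^ 2) := by positivity
            apply div_nonpos_of_nonpos_of_nonneg <;> nlinarith
        _ ≤ (2 * π) ^ ((3:ℝ)/2) * (1 + u ^ 2)⁻¹ := by
            rw [mul_one, Real.div_rpow (by positivity) h1.le, div_eq_mul_inv]
            refine mul_le_mul_of_nonneg_left ?_ (by positivity)
            rw [← Real.rpow_neg_one ((1 + u ^ 2)), ← Real.rpow_neg h1.le]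
            exact Real.rpow_le_rpow_of_exponent_le (by nlinarith [sq_nonneg u]) (by norm_num)

lemma phi_hasDeriv (u : ℝ) :
    HasDerivAt (fun u : ℝ => u / Real.sqrt (1 + u ^ 2))
      (((1 + u ^ 2) * Real.sqrt (1 + u ^ 2))⁻¹) u := by
  have h1 : (0:ℝ) < 1 + u ^ 2 := by positivity
  have hs : (0:ℝ) < Real.sqrt (1 + u ^ 2) := Real.sqrt_pos.mpr h1
  have hinner : HasDerivAt (fun u : ℝ => 1 + u ^ 2) (2 * u) u := by
    simpa using (hasDerivAt_pow 2 u).const_add 1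
  have hsq : HasDerivAt (fun u : ℝ => Real.sqrt (1 + u ^ 2))
      (1 / (2 * Real.sqrt (1 + u ^ 2)) * (2 * u)) u :=
    (Real.hasDerivAt_sqrt h1.ne').comp u hinner
  have hd := (hasDerivAt_id u).div hsq hs.ne'
  refine hd.congr_deriv (Eq.symm ?_)
  have hss : Real.sqrt (1 + u ^ 2) ^ 2 = 1 + u ^ 2 := Real.sq_sqrt h1.le
  rw [eq_div_iff (by positivity), hss]
  simp only [id_eq, one_mul]
  field_simp
  linear_combination (-1 : ℝ) * hss

lemma phi_image : (fun u : ℝ => u / Real.sqrt (1 + u ^ 2)) '' Set.Ioi 0 = Set.Ioo 0 1 := by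
  ext v
  simp only [Set.mem_image, Set.mem_Ioi, Set.mem_Ioo]
  constructor
  · rintro ⟨u, hu, rfl⟩
    have h1 : (0:ℝ) < 1 + u ^ 2 := by positivity
    have hs : (0:ℝ) < Real.sqrt (1 + u ^ 2) := Real.sqrt_pos.mpr h1
    refine ⟨by positivity, ?_⟩
    rw [div_lt_one hs]
    rw [show (Real.sqrt (1 + u ^ 2)) = Real.sqrt (1 + u ^ 2) from rfl]
    exact (Real.lt_sqrt hu.le).mpr (by nlinarith)
  · rintro ⟨hv0, hv1⟩
    have hvv : (0:ℝ) < 1 - v ^ 2 := by nlinarith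
    have hw : (0:ℝ) < Real.sqrt (1 - v ^ 2) := Real.sqrt_pos.mpr hvv
    have hw2 : Real.sqrt (1 - v ^ 2) ^ 2 = 1 - v ^ 2 := Real.sq_sqrt hvv.le
    refine ⟨v / Real.sqrt (1 - v ^ 2), by positivity, ?_⟩
    have key : 1 + (v / Real.sqrt (1 - v ^ 2)) ^ 2 = ((Real.sqrt (1 - v ^ 2))⁻¹) ^ 2 := by
      rw [div_pow, hw2, inv_pow, hw2]
      field_simp
      ring
    rw [key, Real.sqrt_sq (by positivity)]
    field_simp

lemma cov (a : ℝ) :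
    ∫ v in Set.Ioo (0:ℝ) 1, Real.exp (-a ^ 2 * v ^ 2 / 2)
      = ∫ u in Set.Ioi (0:ℝ), ((1 + u ^ 2) * Real.sqrt (1 + u ^ 2))⁻¹ *
          Real.exp (-(u ^ 2 * a ^ 2) / (2 * (1 + u ^ 2))) := by
  have hinj : Set.InjOn (fun u : ℝ => u / Real.sqrt (1 + u ^ 2)) (Set.Ioi 0) := by
    refine StrictMonoOn.injOn (strictMonoOn_of_deriv_pos (convex_Ioi 0) ?_ ?_)
    · refine Continuous.continuousOn ?_
      exact continuous_id.div (by fun_prop) (fun u => by positivity)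
    · intro u hu
      rw [(phi_hasDeriv u).deriv]
      positivity
  rw [← phi_image, integral_image_eq_integral_abs_deriv_smul measurableSet_Ioi
    (fun u _ => (phi_hasDeriv u).hasDerivWithinAt) hinj]
  refine setIntegral_congr_fun measurableSet_Ioi (fun u hu => ?_)
  have h1 : (0:ℝ) < 1 + u ^ 2 := by positivity
  have hs : (0:ℝ) < Real.sqrt (1 + u ^ 2) := Real.sqrt_pos.mpr h1
  rw [smul_eq_mul, abs_of_pos (by positivity)]
  congr 1
  rw [div_pow, Real.sq_sqrt h1.le]
  field_simp

lemma ae_ne (x : E3) : ∀ᵐ z : E3, x + z ≠ 0 := by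
  have hset : {z : E3 | ¬ x + z ≠ 0} = {-x} := by
    ext z
    simp only [Set.mem_setOf_eq, not_not, Set.mem_singleton_iff]
    constructor
    · intro h
      have := congrArg (fun w => -x + w) h
      simpa [← add_assoc] using this
    · intro h; rw [h]; abel
  rw [Filter.eventually_iff, mem_ae_iff]
  rw [show {z : E3 | x + z ≠ 0}ᶜ = {z : E3 | ¬ x + z ≠ 0} from rfl, hset]
  exact measure_singleton _

lemma rpow_fact (u : ℝ) :
    (2 * π / (1 + u ^ 2)) ^ ((3:ℝ)/2)
      = (2 * π) ^ ((3:ℝ)/2) * ((1 + u ^ 2) * Real.sqrt (1 + u ^ 2))⁻¹ := by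
  have h1 : (0:ℝ) < 1 + u ^ 2 := by positivity
  rw [Real.div_rpow (by positivity) h1.le, div_eq_mul_inv]
  congr 2
  rw [show (3:ℝ)/2 = 1 + 1/2 by norm_num, Real.rpow_add h1, Real.rpow_one,
    ← Real.sqrt_eq_rpow]

lemma rep (x : E3) :
    ∫ z : E3, (2 * π) ^ (-(3:ℝ) / 2) * Real.exp (-‖z‖ ^ 2 / 2) * (1 / ‖x + z‖)
      = Real.sqrt (2 / π) * ∫ v in Set.Ioo (0:ℝ) 1, Real.exp (-‖x‖ ^ 2 * v ^ 2 / 2) := by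
  have hK : (0:ℝ) < (2 * π) ^ (-(3:ℝ) / 2) := by positivity
  have hae : ∀ᵐ z : E3,
      (2 * π) ^ (-(3:ℝ) / 2) * Real.exp (-‖z‖ ^ 2 / 2) * (1 / ‖x + z‖)
        = ((2 * π) ^ (-(3:ℝ) / 2) * Real.sqrt (2 / π)) *
            ∫ u in Set.Ioi (0:ℝ),
              Real.exp (-‖z‖ ^ 2 / 2) * Real.exp (-u ^ 2 * ‖x + z‖ ^ 2 / 2) := by
    filter_upwards [ae_ne x] with z hz
    have ht : (0:ℝ) < ‖x + z‖ := norm_pos_iff.mpr hz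
    rw [MeasureTheory.integral_const_mul, halfline ht]
    have h2 : Real.sqrt (2 / π) * (Real.sqrt (2 * π) / (2 * ‖x + z‖)) = 1 / ‖x + z‖ := by
      rw [← mul_div_assoc, sqrt_fact]
      field_simp
    calc (2 * π) ^ (-(3:ℝ) / 2) * Real.exp (-‖z‖ ^ 2 / 2) * (1 / ‖x + z‖)
        = (2 * π) ^ (-(3:ℝ) / 2) * Real.exp (-‖z‖ ^ 2 / 2) *
            (Real.sqrt (2 / π) * (Real.sqrt (2 * π) / (2 * ‖x + z‖))) := by rw [h2]
      _ = (2 * π) ^ (-(3:ℝ) / 2) * Real.sqrt (2 / π) *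
            (Real.exp (-‖z‖ ^ 2 / 2) * (Real.sqrt (2 * π) / (2 * ‖x + z‖))) := by ring
  rw [integral_congr_ae hae, MeasureTheory.integral_const_mul]
  rw [← MeasureTheory.integral_integral_swap (integrableF x)]
  simp_rw [innerIntegral x, rpow_fact]
  simp_rw [mul_assoc]
  rw [MeasureTheory.integral_const_mul]
  have hKK : (2 * π) ^ (-(3:ℝ) / 2) * Real.sqrt (2 / π) * (2 * π) ^ ((3:ℝ)/2)
      = Real.sqrt (2 / π) := by
    rw [show (2 * π) ^ (-(3:ℝ) / 2) * Real.sqrt (2 / π) * (2 * π) ^ ((3:ℝ)/2)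
      = (2 * π) ^ (-(3:ℝ) / 2) * (2 * π) ^ ((3:ℝ)/2) * Real.sqrt (2 / π) by ring]
    rw [← Real.rpow_add (by positivity)]
    norm_num
  rw [← mul_assoc, ← mul_assoc, hKK]
  congr 1
  rw [cov ‖x‖]

lemma scale_int {a : ℝ} (ha : 0 < a) :
    ∫ v in Set.Ioo (0:ℝ) 1, Real.exp (-a ^ 2 * v ^ 2 / 2)
      = a⁻¹ * ∫ s in Set.Ioo (0:ℝ) a, Real.exp (-s ^ 2 / 2) := by
  have himg : (fun v : ℝ => a * v) '' Set.Ioo 0 1 = Set.Ioo 0 a := by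
    ext s
    simp only [Set.mem_image, Set.mem_Ioo]
    constructor
    · rintro ⟨v, ⟨h0, h1⟩, rfl⟩
      constructor
      · positivity
      · nlinarith
    · rintro ⟨h0, h1⟩
      exact ⟨s / a, ⟨by positivity, by rw [div_lt_one ha]; exact h1⟩, by field_simp⟩
  have hd : ∀ v : ℝ, HasDerivAt (fun v : ℝ => a * v) a v := fun v => by
    simpa using (hasDerivAt_id v).const_mul a
  rw [← himg, integral_image_eq_integral_abs_deriv_smul measurableSet_Ioo
    (fun v _ => (hd v).hasDerivWithinAt) ((mul_right_injective₀ ha.ne').injOn)]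
  simp only [smul_eq_mul, abs_of_pos ha]
  rw [MeasureTheory.integral_const_mul, ← mul_assoc, inv_mul_cancel₀ ha.ne', one_mul]
  refine setIntegral_congr_fun measurableSet_Ioo (fun v _ => ?_)
  ring_nf

lemma even_int {a : ℝ} (ha : 0 < a) :
    ∫ s in Set.Ioo (-a) a, Real.exp (-s ^ 2 / 2)
      = 2 * ∫ s in Set.Ioo (0:ℝ) a, Real.exp (-s ^ 2 / 2) := by
  have hc : Continuous fun s : ℝ => Real.exp (-s ^ 2 / 2) := by fun_prop
  rw [← MeasureTheory.integral_Ioc_eq_integral_Ioo,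
    ← intervalIntegral.integral_of_le (by linarith : -a ≤ a)]
  rw [← intervalIntegral.integral_add_adjacent_intervals
    (hc.intervalIntegrable (-a) 0) (hc.intervalIntegrable 0 a)]
  have hneg := intervalIntegral.integral_comp_neg (a := 0) (b := a)
    (fun s => Real.exp (-s ^ 2 / 2))
  simp only [neg_neg, neg_sq, neg_zero] at hneg
  rw [← hneg, intervalIntegral.integral_of_le ha.le,
    MeasureTheory.integral_Ioc_eq_integral_Ioo]
  ring

/-- Newton's theorem for the Coulomb potential of a standard Gaussian in `ℝ³`:
for any `x`, `E[1/‖x+Z‖] ≤ √(2/π)`, and for `x ≠ 0`,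
`E[1/‖x+Z‖] = (1/‖x‖)·P(|W| ≤ ‖x‖)` with `W` a one-dimensional standard Gaussian,
i.e. `E[1/‖x+Z‖] = (1/‖x‖)(2Φ(‖x‖) − 1)` for `Φ` the standard normal CDF. -/
theorem gaussian3d_shifted_inv_norm (x : EuclideanSpace ℝ (Fin 3)) :
    (∫ z : EuclideanSpace ℝ (Fin 3),
        (2 * π) ^ (-(3 : ℝ) / 2) * Real.exp (-‖z‖ ^ 2 / 2) * (1 / ‖x + z‖)
      ≤ Real.sqrt (2 / π)) ∧
    (x ≠ 0 →
      ∫ z : EuclideanSpace ℝ (Fin 3),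
          (2 * π) ^ (-(3 : ℝ) / 2) * Real.exp (-‖z‖ ^ 2 / 2) * (1 / ‖x + z‖)
        = (1 / ‖x‖) *
            ∫ s in Set.Icc (-‖x‖) ‖x‖, (Real.sqrt (2 * π))⁻¹ * Real.exp (-s ^ 2 / 2)) := by
  constructor
  · rw [rep x]
    have hint : IntegrableOn (fun v : ℝ => Real.exp (-‖x‖ ^ 2 * v ^ 2 / 2)) (Set.Ioo 0 1) := by
      exact ((Continuous.integrableOn_Icc (f := fun v : ℝ => Real.exp (-‖x‖ ^ 2 * v ^ 2 / 2))
        (a := 0) (b := 1) (by fun_prop))).mono_set Set.Ioo_subset_Icc_self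
    have hle : ∫ v in Set.Ioo (0:ℝ) 1, Real.exp (-‖x‖ ^ 2 * v ^ 2 / 2) ≤ 1 := by
      calc ∫ v in Set.Ioo (0:ℝ) 1, Real.exp (-‖x‖ ^ 2 * v ^ 2 / 2)
          ≤ ∫ _ in Set.Ioo (0:ℝ) 1, (1:ℝ) := by
            refine setIntegral_mono_on hint
              (integrableOn_const (by simp [Real.volume_Ioo])) measurableSet_Ioo
              (fun v _ => ?_)
            rw [Real.exp_le_one_iff]
            nlinarith [sq_nonneg (‖x‖ * v)]
        _ = 1 := by simp [Real.volume_Ioo]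
    calc Real.sqrt (2 / π) * ∫ v in Set.Ioo (0:ℝ) 1, Real.exp (-‖x‖ ^ 2 * v ^ 2 / 2)
        ≤ Real.sqrt (2 / π) * 1 := mul_le_mul_of_nonneg_left hle (Real.sqrt_nonneg _)
      _ = Real.sqrt (2 / π) := mul_one _
  · intro hx
    have ha : (0:ℝ) < ‖x‖ := norm_pos_iff.mpr hx
    rw [rep x, scale_int ha, MeasureTheory.integral_Icc_eq_integral_Ioo,
      MeasureTheory.integral_const_mul, even_int ha]
    have hs : Real.sqrt (2 / π) = 2 * (Real.sqrt (2 * π))⁻¹ := by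
      have hpos : (0:ℝ) < Real.sqrt (2 * π) := Real.sqrt_pos.mpr (by positivity)
      field_simp
      linear_combination sqrt_fact
    rw [hs]
    ring
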